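/- arXiv:1801.09811 — 2 statements merged into one kernel-verified Lean document; each statement's English description precedes it below -/
import Mathlib

section
/- Let S be the swap matrix on ℂ^n ⊗ ℂ^n (entries S (i,j) (k,l) = 1 if i = l and j = k, else 0), let θ be real, and set U = (cos θ) • 1 + (i · sin θ) • S. Then for every n×n complex matrix ρ and every n×n complex matrix C: trace((C ⊗ₖ 1) * U * (ρ ⊗ₖ ((1/n) • 1)) * Uᴴ) = (cos θ)^2 · trace(C*ρ) + ((sin θ)^2 / n) · trace(ρ) · trace(C). (Equivalently: the reduced system state after partial-swap interaction with a maximally mixed environment is the depolarising channel cos²θ · ρ + sin²θ · trace(ρ) · 𝟙/n.) -/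
open scoped Matrix Kronecker

/-- The swap matrix on `ℂ^n ⊗ ℂ^n`. -/
def swapMatrix (n : ℕ) : Matrix (Fin n × Fin n) (Fin n × Fin n) ℂ :=
  fun p q => if p.1 = q.2 ∧ p.2 = q.1 then 1 else 0

lemma swap_mul_apply {n : ℕ} (X : Matrix (Fin n × Fin n) (Fin n × Fin n) ℂ)
    (p q : Fin n × Fin n) :
    (swapMatrix n * X) p q = X p.swap q := by
  rw [Matrix.mul_apply, Finset.sum_eq_single p.swap]
  · simp [swapMatrix]
  · rintro ⟨a, b⟩ _ hab
    simp only [swapMatrix]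
    rw [if_neg, zero_mul]
    rintro ⟨h1, h2⟩
    exact hab (by simp [Prod.ext_iff, ← h1, ← h2])
  · simp

lemma mul_swap_apply {n : ℕ} (X : Matrix (Fin n × Fin n) (Fin n × Fin n) ℂ)
    (p q : Fin n × Fin n) :
    (X * swapMatrix n) p q = X p q.swap := by
  rw [Matrix.mul_apply, Finset.sum_eq_single q.swap]
  · simp [swapMatrix]
  · rintro ⟨a, b⟩ _ hab
    simp only [swapMatrix]
    rw [if_neg, mul_zero]
    rintro ⟨h1, h2⟩
    exact hab (by simp [Prod.ext_iff, h1, h2])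
  · simp

lemma swap_herm {n : ℕ} : (swapMatrix n)ᴴ = swapMatrix n := by
  ext ⟨i, j⟩ ⟨k, l⟩
  simp only [Matrix.conjTranspose_apply, swapMatrix]
  split_ifs <;> simp_all

lemma swap_mul_swap {n : ℕ} : swapMatrix n * swapMatrix n = 1 := by
  ext ⟨i, j⟩ ⟨k, l⟩
  rw [swap_mul_apply]
  simp only [swapMatrix, Matrix.one_apply, Prod.mk.injEq, Prod.swap_prod_mk]
  split_ifs <;> simp_all

lemma swap_mul_kron {n : ℕ} (A B : Matrix (Fin n) (Fin n) ℂ) :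
    swapMatrix n * (A ⊗ₖ B) = (B ⊗ₖ A) * swapMatrix n := by
  ext ⟨i, j⟩ ⟨k, l⟩
  rw [swap_mul_apply, mul_swap_apply]
  simp [Matrix.kroneckerMap_apply, mul_comm]

lemma swap_kron_swap {n : ℕ} (A B : Matrix (Fin n) (Fin n) ℂ) :
    swapMatrix n * (A ⊗ₖ B) * swapMatrix n = B ⊗ₖ A := by
  rw [swap_mul_kron, Matrix.mul_assoc, swap_mul_swap, Matrix.mul_one]

lemma trace_kron_mul_swap {n : ℕ} (A B : Matrix (Fin n) (Fin n) ℂ) :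
    Matrix.trace ((A ⊗ₖ B) * swapMatrix n) = Matrix.trace (A * B) := by
  have h : ∀ p : Fin n × Fin n, ((A ⊗ₖ B) * swapMatrix n) p p = A p.1 p.2 * B p.2 p.1 := by
    intro p
    rw [mul_swap_apply]
    simp [Matrix.kroneckerMap_apply]
  simp only [Matrix.trace, Matrix.diag, h, Matrix.mul_apply]
  rw [Fintype.sum_prod_type]


/-- The reduced system state after the partial swap interaction with a maximally mixed
environment is the depolarising channel `cos²θ • ρ + sin²θ • tr(ρ) • 𝟙/n`, expressed in
weak (duality) form against an arbitrary system observable `C`. -/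
theorem partial_swap_depolarising {n : ℕ} (θ : ℝ)
    (U : Matrix (Fin n × Fin n) (Fin n × Fin n) ℂ)
    (hU : U = (Real.cos θ : ℂ) • (1 : Matrix (Fin n × Fin n) (Fin n × Fin n) ℂ)
        + (Complex.I * (Real.sin θ : ℂ)) • swapMatrix n)
    (ρ C : Matrix (Fin n) (Fin n) ℂ) :
    Matrix.trace ((C ⊗ₖ (1 : Matrix (Fin n) (Fin n) ℂ)) * U *
        (ρ ⊗ₖ (((1 : ℂ) / n) • (1 : Matrix (Fin n) (Fin n) ℂ))) * Uᴴ) =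
      (Real.cos θ : ℂ) ^ 2 * Matrix.trace (C * ρ)
        + ((Real.sin θ : ℂ) ^ 2 / n) * Matrix.trace ρ * Matrix.trace C := by
  rcases Nat.eq_zero_or_pos n with hn | hn
  · subst hn
    simp [Matrix.trace]
  have hn' : (n : ℂ) ≠ 0 := Nat.cast_ne_zero.2 hn.ne'
  have hUH : Uᴴ = (Real.cos θ : ℂ) • (1 : Matrix (Fin n × Fin n) (Fin n × Fin n) ℂ)
      + (-(Complex.I * (Real.sin θ : ℂ))) • swapMatrix n := by
    rw [hU, Matrix.conjTranspose_add, Matrix.conjTranspose_smul, Matrix.conjTranspose_smul,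
      Matrix.conjTranspose_one, swap_herm]
    congr 2
    · rw [Complex.star_def, Complex.conj_ofReal]
    · simp only [star_mul', Complex.star_def, Complex.conj_I, Complex.conj_ofReal]
      ring
  set S := swapMatrix n with hS
  set E : Matrix (Fin n) (Fin n) ℂ := ((1 : ℂ) / n) • 1 with hE
  have h1 : Matrix.trace ((C ⊗ₖ (1 : Matrix (Fin n) (Fin n) ℂ)) * (ρ ⊗ₖ E)) =
      Matrix.trace (C * ρ) := by
    rw [← Matrix.mul_kronecker_mul, Matrix.trace_kronecker, Matrix.one_mul, hE,
      Matrix.trace_smul, Matrix.trace_one]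
    simp [Finset.card_univ]
    field_simp
  have h2 : Matrix.trace ((C ⊗ₖ (1 : Matrix (Fin n) (Fin n) ℂ)) * (ρ ⊗ₖ E) * S) =
      (1 / (n : ℂ)) * Matrix.trace (C * ρ) := by
    rw [← Matrix.mul_kronecker_mul, Matrix.one_mul, trace_kron_mul_swap, hE,
      Matrix.mul_smul, Matrix.mul_one, Matrix.trace_smul]
    simp
  have h3 : Matrix.trace ((C ⊗ₖ (1 : Matrix (Fin n) (Fin n) ℂ)) * S * (ρ ⊗ₖ E)) =
      (1 / (n : ℂ)) * Matrix.trace (C * ρ) := by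
    rw [Matrix.mul_assoc, hS, swap_mul_kron, ← Matrix.mul_assoc, ← Matrix.mul_kronecker_mul,
      Matrix.one_mul, trace_kron_mul_swap, hE, Matrix.mul_smul, Matrix.smul_mul,
      Matrix.mul_one, Matrix.trace_smul]
    simp
  have h4 : Matrix.trace ((C ⊗ₖ (1 : Matrix (Fin n) (Fin n) ℂ)) * S * (ρ ⊗ₖ E) * S) =
      (1 / (n : ℂ)) * Matrix.trace C * Matrix.trace ρ := by
    rw [Matrix.mul_assoc, Matrix.mul_assoc, ← Matrix.mul_assoc S, hS, swap_kron_swap,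
      ← Matrix.mul_kronecker_mul, Matrix.one_mul, Matrix.trace_kronecker, hE,
      Matrix.mul_smul, Matrix.mul_one, Matrix.trace_smul]
    simp [mul_assoc]
  rw [hUH, hU]
  simp only [Matrix.mul_add, Matrix.add_mul, Matrix.mul_smul, Matrix.smul_mul,
    Matrix.mul_one, Matrix.one_mul, Matrix.trace_add, Matrix.trace_smul, smul_eq_mul]
  rw [h1, h2, h3, h4]
  have hI2 : (Complex.I) ^ 2 = -1 := Complex.I_sq
  linear_combination (-((Real.sin θ : ℂ) ^ 2 / n * Matrix.trace C * Matrix.trace ρ)) * hI2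
end

section
/- Let S be the swap matrix on ℂ^n ⊗ ℂ^n (entries S (i,j) (k,l) = 1 if i = l and j = k, else 0), let θ be real, and set U = (cos θ) • 1 + (i · sin θ) • S. Then for all n×n complex matrices ρ, Π, D: trace((Π ⊗ₖ D) * U * (ρ ⊗ₖ ((1/n) • 1)) * Uᴴ) = (1/n) · [ (cos θ)^2 · trace(ρ*Π) · trace(D) + (sin θ)^2 · trace(Π) · trace(D*ρ) + i · cos θ · sin θ · trace((ρ*Π − Π*ρ) * D) ]. -/
open scoped Matrix Kronecker

/-!
Expanding `U = cos θ • 1 + (i sin θ) • S` and `Uᴴ = cos θ • 1 - (i sin θ) • S` splits the trace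
into four terms. The swap matrix `S` is the permutation matrix of `Prod.swap`, so it conjugates
`X ⊗ₖ Y` into `Y ⊗ₖ X` and satisfies `tr ((X ⊗ₖ Y) * S) = tr (X * Y)`; with these two identities
each term reduces to traces of products on `ℂⁿ`.
-/

open Matrix

section SwapMatrix

variable {n : ℕ}

lemma swapMatrix_eq_permMatrix :
    swapMatrix n = Equiv.Perm.permMatrix ℂ (Equiv.prodComm (Fin n) (Fin n)) := by
  ext ⟨i, j⟩ ⟨k, l⟩
  simp [swapMatrix, Prod.ext_iff, and_comm]

lemma conjTranspose_swapMatrix : (swapMatrix n)ᴴ = swapMatrix n := by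
  rw [swapMatrix_eq_permMatrix, conjTranspose_permMatrix]
  rfl

lemma swapMatrix_mul (M : Matrix (Fin n × Fin n) (Fin n × Fin n) ℂ) :
    swapMatrix n * M = M.submatrix Prod.swap id := by
  rw [swapMatrix_eq_permMatrix, PEquiv.toMatrix_toPEquiv_mul]
  rfl

lemma mul_swapMatrix (M : Matrix (Fin n × Fin n) (Fin n × Fin n) ℂ) :
    M * swapMatrix n = M.submatrix id Prod.swap := by
  rw [swapMatrix_eq_permMatrix, PEquiv.mul_toMatrix_toPEquiv]
  rfl

lemma swapMatrix_mul_kronecker_mul_swapMatrix (X Y : Matrix (Fin n) (Fin n) ℂ) :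
    swapMatrix n * (X ⊗ₖ Y) * swapMatrix n = Y ⊗ₖ X := by
  rw [swapMatrix_mul, mul_swapMatrix]
  ext ⟨i, j⟩ ⟨k, l⟩
  exact mul_comm _ _

lemma trace_kronecker_mul_swapMatrix (X Y : Matrix (Fin n) (Fin n) ℂ) :
    trace ((X ⊗ₖ Y) * swapMatrix n) = trace (X * Y) := by
  simp [mul_swapMatrix, trace, Fintype.sum_prod_type, mul_apply]

end SwapMatrix

lemma trace_mul_smul_one_add_smul_mul_mul_smul_one_add_smul {ι R : Type*} [Fintype ι]
    [DecidableEq ι] [CommRing R] (A B S : Matrix ι ι R) (c a b : R) :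
    trace (A * (c • 1 + a • S) * B * (c • 1 + b • S)) =
      c ^ 2 * trace (A * B) + c * b * trace (A * B * S) + a * c * trace (A * S * B)
        + a * b * trace (A * S * B * S) := by
  simp only [Matrix.mul_add, Matrix.add_mul, Matrix.mul_smul, Matrix.smul_mul, Matrix.mul_one,
    trace_add, trace_smul, smul_eq_mul]
  ring

lemma conjTranspose_cos_smul_one_add_I_sin_smul_swapMatrix {n : ℕ} (θ : ℝ) :
    ((Real.cos θ : ℂ) • (1 : Matrix (Fin n × Fin n) (Fin n × Fin n) ℂ)
        + (Complex.I * (Real.sin θ : ℂ)) • swapMatrix n)ᴴ =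
      (Real.cos θ : ℂ) • 1 + (-(Complex.I * (Real.sin θ : ℂ))) • swapMatrix n := by
  simp [conjTranspose_swapMatrix, -Complex.ofReal_cos, -Complex.ofReal_sin]

/-- The (unnormalised) conditional environment operator after a measurement with POVM
element `P` at the causal break, in weak form against an environment observable `D`. -/
theorem partial_swap_conditional_env {n : ℕ} (θ : ℝ)
    (U : Matrix (Fin n × Fin n) (Fin n × Fin n) ℂ)
    (hU : U = (Real.cos θ : ℂ) • (1 : Matrix (Fin n × Fin n) (Fin n × Fin n) ℂ)
        + (Complex.I * (Real.sin θ : ℂ)) • swapMatrix n)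
    (ρ P D : Matrix (Fin n) (Fin n) ℂ) :
    Matrix.trace ((P ⊗ₖ D) * U *
        (ρ ⊗ₖ (((1 : ℂ) / n) • (1 : Matrix (Fin n) (Fin n) ℂ))) * Uᴴ) =
      (1 / (n : ℂ)) *
        ((Real.cos θ : ℂ) ^ 2 * Matrix.trace (ρ * P) * Matrix.trace D
          + (Real.sin θ : ℂ) ^ 2 * Matrix.trace P * Matrix.trace (D * ρ)
          + Complex.I * (Real.cos θ : ℂ) * (Real.sin θ : ℂ) *
              Matrix.trace ((ρ * P - P * ρ) * D)) := by
  subst hU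
  set S := swapMatrix n
  have h_direct : trace ((P ⊗ₖ D) * (ρ ⊗ₖ 1)) = trace (ρ * P) * trace D := by
    rw [← mul_kronecker_mul, trace_kronecker, mul_one, trace_mul_comm]
  have h_right : trace ((P ⊗ₖ D) * (ρ ⊗ₖ 1) * S) = trace (P * ρ * D) := by
    rw [← mul_kronecker_mul, trace_kronecker_mul_swapMatrix, mul_one]
  have h_left : trace ((P ⊗ₖ D) * S * (ρ ⊗ₖ 1)) = trace (ρ * P * D) := by
    rw [trace_mul_comm, ← Matrix.mul_assoc, ← mul_kronecker_mul, trace_kronecker_mul_swapMatrix,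
      one_mul]
  have h_swapped : trace ((P ⊗ₖ D) * S * (ρ ⊗ₖ 1) * S) = trace P * trace (D * ρ) := by
    rw [Matrix.mul_assoc _ S, Matrix.mul_assoc, swapMatrix_mul_kronecker_mul_swapMatrix,
      ← mul_kronecker_mul, trace_kronecker, mul_one]
  rw [kronecker_smul, Matrix.mul_smul, Matrix.smul_mul, trace_smul, smul_eq_mul,
    conjTranspose_cos_smul_one_add_I_sin_smul_swapMatrix,
    trace_mul_smul_one_add_smul_mul_mul_smul_one_add_smul, h_direct, h_right, h_left, h_swapped,
    Matrix.sub_mul, trace_sub]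
  linear_combination (-(1 / (n : ℂ)) * (Real.sin θ : ℂ) ^ 2 * trace P * trace (D * ρ)) *
    Complex.I_sq
end
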